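/- For σ > 0, γ > 0, the centered Voigt density at zero satisfies p(0) = √(2/π) · (1/σ) · e^{γ²/(2σ²)} · (1 − Φ(γ/σ)); equivalently 2π · p(0) · p'(0) = 1, where p'(0) = [1/(2(1 − Φ(γ/σ)))] · (σ/√(2π)) · e^{−γ²/(2σ²)} is the Dual Voigt density at zero. -/

import Mathlib

open MeasureTheory ProbabilityTheory Real

/-- The standard normal cumulative distribution function. -/
noncomputable def stdNormalCDF (t : ℝ) : ℝ :=
  ∫ s in Set.Iic t, (1 / Real.sqrt (2 * π)) * Real.exp (-s ^ 2 / 2)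

/-- The centered Voigt(γ, σ²) density: the convolution of the Cauchy(0, γ) density with
the N(0, σ²) density. -/
noncomputable def voigtDensity (σ γ : ℝ) (u : ℝ) : ℝ :=
  ∫ x : ℝ, (γ / (π * (x ^ 2 + γ ^ 2))) *
    (1 / (σ * Real.sqrt (2 * π)) * Real.exp (-(u - x) ^ 2 / (2 * σ ^ 2)))

/-- The Dual Voigt(γ, σ²) density. -/
noncomputable def dualVoigtDensity (σ γ : ℝ) (u : ℝ) : ℝ :=
  1 / (2 * (1 - stdNormalCDF (γ / σ))) * (σ / Real.sqrt (2 * π)) *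
    Real.exp (-γ ^ 2 / (2 * σ ^ 2)) * Real.exp (-γ * |u| - σ ^ 2 * u ^ 2 / 2)

/-!
The Cauchy kernel is a Laplace transform, `γ / (x² + γ²) = ∫₀^∞ e^{-γs} cos (s x) ds`, and the
cosine transform of a Gaussian is again a Gaussian. Exchanging the two integrals gives
`p(0) = π⁻¹ ∫₀^∞ e^{-γs - σ²s²/2} ds`, and completing the square turns this into the Gaussian
tail `√(2π) e^{γ²/(2σ²)} (1 - Φ(γ/σ)) / σ`. The identity `2π p(0) p'(0) = 1` is then algebra,
because `Φ < 1`.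
-/

open Set

theorem integral_comp_add_right_Ioi {E : Type*} [NormedAddCommGroup E] [NormedSpace ℝ E]
    (f : ℝ → E) (a c : ℝ) :
    ∫ x in Ioi a, f (x + c) = ∫ x in Ioi (a + c), f x := by
  simpa using (measurePreserving_add_right volume c).setIntegral_preimage_emb
    (measurableEmbedding_addRight c) f (Ioi (a + c))

theorem integral_exp_neg_mul_mul_cos_Ioi {γ : ℝ} (hγ : 0 < γ) (x : ℝ) :
    ∫ s in Ioi 0, exp (-γ * s) * cos (s * x) = γ / (x ^ 2 + γ ^ 2) := by
  have ha : (-γ + x * Complex.I).re < 0 := by simpa using hγ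
  have h := congrArg Complex.re (integral_exp_mul_complex_Ioi ha 0)
  rw [← RCLike.re_eq_complex_re, ← integral_re (integrableOn_exp_mul_complex_Ioi ha 0)] at h
  convert h using 1
  · refine setIntegral_congr_fun measurableSet_Ioi fun s _ => ?_
    rw [RCLike.re_eq_complex_re, Complex.exp_re]
    simp [mul_comm]
  · simp [Complex.div_re, Complex.normSq, sq, add_comm]

theorem integral_cos_mul_exp_neg_mul_sq {b : ℝ} (hb : 0 < b) (s : ℝ) :
    ∫ x, cos (s * x) * exp (-b * x ^ 2) = √(π / b) * exp (-s ^ 2 / (4 * b)) := by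
  have hb' : 0 < (b : ℂ).re := by simpa using hb
  have hint : Integrable fun x : ℝ => Complex.exp (Complex.I * s * x) * Complex.exp (-b * x ^ 2) := by
    refine (integrable_cexp_quadratic hb' (Complex.I * s) 0).congr (.of_forall fun x => ?_)
    simp only [← Complex.exp_add]
    ring_nf
  have h := congrArg Complex.re (fourierIntegral_gaussian hb' s)
  rw [← RCLike.re_eq_complex_re, ← integral_re hint] at h
  have hsqrt : ((π : ℂ) / b) ^ (1 / 2 : ℂ) = (√(π / b) : ℝ) := by
    rw [sqrt_eq_rpow, Complex.ofReal_cpow (by positivity)]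
    push_cast
    ring_nf
  convert h using 1
  · refine integral_congr_ae (.of_forall fun x => ?_)
    simp [← Complex.exp_add, Complex.exp_re, ← Complex.ofReal_pow, mul_comm]
  · rw [hsqrt, RCLike.re_eq_complex_re]
    norm_cast

theorem integrable_exp_neg_sq_div_two : Integrable fun u : ℝ => exp (-u ^ 2 / 2) := by
  simpa [div_eq_inv_mul] using integrable_exp_neg_mul_sq (b := 1 / 2) (by norm_num)

theorem integral_exp_neg_sq_div_two : ∫ u : ℝ, exp (-u ^ 2 / 2) = √(2 * π) := by
  simpa [div_eq_inv_mul, mul_comm] using integral_gaussian (1 / 2)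

theorem integral_exp_neg_sq_div_two_Ioi (t : ℝ) :
    ∫ u in Ioi t, exp (-u ^ 2 / 2) = √(2 * π) * (1 - stdNormalCDF t) := by
  have hsplit := intervalIntegral.integral_Iic_add_Ioi (b := t)
    integrable_exp_neg_sq_div_two.integrableOn integrable_exp_neg_sq_div_two.integrableOn
  have hπ : 0 < √(2 * π) := by positivity
  rw [integral_exp_neg_sq_div_two] at hsplit
  rw [stdNormalCDF, integral_const_mul, mul_sub, mul_one, ← mul_assoc, mul_one_div_cancel hπ.ne',
    one_mul]
  linarith

theorem stdNormalCDF_lt_one (t : ℝ) : stdNormalCDF t < 1 := by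
  have hpos : 0 < ∫ u in Ioi t, exp (-u ^ 2 / 2) := by
    rw [setIntegral_pos_iff_support_of_nonneg_ae (.of_forall fun u => (exp_pos _).le)
      integrable_exp_neg_sq_div_two.integrableOn]
    simp [Function.support, exp_ne_zero]
  rw [integral_exp_neg_sq_div_two_Ioi] at hpos
  have hπ : 0 < √(2 * π) := by positivity
  nlinarith

theorem integral_exp_neg_mul_sub_mul_sq_Ioi {σ : ℝ} (hσ : 0 < σ) (γ : ℝ) :
    ∫ s in Ioi 0, exp (-γ * s - σ ^ 2 * s ^ 2 / 2) =
      exp (γ ^ 2 / (2 * σ ^ 2)) / σ * ∫ u in Ioi (γ / σ), exp (-u ^ 2 / 2) := by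
  have hsquare : ∀ s : ℝ, exp (-γ * s - σ ^ 2 * s ^ 2 / 2) =
      exp (γ ^ 2 / (2 * σ ^ 2)) * exp (-(σ * s + γ / σ) ^ 2 / 2) := by
    intro s
    rw [← exp_add]
    congr 1
    field_simp
    ring
  simp_rw [hsquare, integral_const_mul]
  rw [integral_comp_mul_left_Ioi (fun u => exp (-(u + γ / σ) ^ 2 / 2)) 0 hσ,
    integral_comp_add_right_Ioi (fun u => exp (-u ^ 2 / 2)), mul_zero, zero_add, smul_eq_mul]
  ring

theorem integral_lorentzian_mul_exp_neg_sq {σ γ : ℝ} (hσ : 0 < σ) (hγ : 0 < γ) :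
    ∫ x, γ / (x ^ 2 + γ ^ 2) * exp (-x ^ 2 / (2 * σ ^ 2)) =
      σ * √(2 * π) * ∫ s in Ioi 0, exp (-γ * s - σ ^ 2 * s ^ 2 / 2) := by
  set F : ℝ → ℝ → ℝ := fun x s => exp (-γ * s) * cos (s * x) * exp (-x ^ 2 / (2 * σ ^ 2))
  have hF : Integrable (Function.uncurry F) (volume.prod (volume.restrict (Ioi 0))) := by
    have hgauss : Integrable fun x : ℝ => exp (-x ^ 2 / (2 * σ ^ 2)) := by
      refine (integrable_exp_neg_mul_sq (b := (2 * σ ^ 2)⁻¹) (by positivity)).congr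
        (.of_forall fun x => ?_)
      ring_nf
    refine (hgauss.mul_prod (exp_neg_integrableOn_Ioi 0 hγ)).mono (by fun_prop)
      (.of_forall fun z => ?_)
    simp only [F, Function.uncurry, norm_mul, Real.norm_eq_abs, abs_exp]
    nlinarith [abs_cos_le_one (z.2 * z.1),
      mul_pos (exp_pos (-γ * z.2)) (exp_pos (-z.1 ^ 2 / (2 * σ ^ 2)))]
  have hgaussFourier : ∀ s : ℝ, ∫ x, cos (s * x) * exp (-x ^ 2 / (2 * σ ^ 2)) =
      σ * √(2 * π) * exp (-(σ ^ 2 * s ^ 2 / 2)) := by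
    intro s
    have h := integral_cos_mul_exp_neg_mul_sq (b := (2 * σ ^ 2)⁻¹) (by positivity) s
    have hsqrt : √(π / (2 * σ ^ 2)⁻¹) = σ * √(2 * π) := by
      rw [div_inv_eq_mul, show π * (2 * σ ^ 2) = σ ^ 2 * (2 * π) by ring, sqrt_mul (sq_nonneg σ),
        sqrt_sq hσ.le]
    rw [hsqrt] at h
    convert h using 5
    · ring
    · field_simp
      ring
  calc ∫ x, γ / (x ^ 2 + γ ^ 2) * exp (-x ^ 2 / (2 * σ ^ 2))
      = ∫ x, ∫ s in Ioi 0, F x s := by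
        simp only [F, integral_mul_const, integral_exp_neg_mul_mul_cos_Ioi hγ]
    _ = ∫ s in Ioi 0, ∫ x, F x s := integral_integral_swap hF
    _ = ∫ s in Ioi 0, σ * √(2 * π) * exp (-γ * s - σ ^ 2 * s ^ 2 / 2) := by
        refine integral_congr_ae (.of_forall fun s => ?_)
        simp only [F, mul_assoc, integral_const_mul, hgaussFourier, sub_eq_add_neg, exp_add]
        ring
    _ = σ * √(2 * π) * ∫ s in Ioi 0, exp (-γ * s - σ ^ 2 * s ^ 2 / 2) := integral_const_mul _ _

theorem voigtDensity_zero {σ γ : ℝ} (hσ : 0 < σ) (hγ : 0 < γ) :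
    voigtDensity σ γ 0 =
      √(2 / π) * (1 / σ) * exp (γ ^ 2 / (2 * σ ^ 2)) * (1 - stdNormalCDF (γ / σ)) := by
  have hvoigt : voigtDensity σ γ 0 =
      1 / (π * σ * √(2 * π)) * ∫ x, γ / (x ^ 2 + γ ^ 2) * exp (-x ^ 2 / (2 * σ ^ 2)) := by
    rw [voigtDensity, ← integral_const_mul]
    congr 1 with x
    rw [zero_sub, neg_sq]
    field_simp
  rw [hvoigt, integral_lorentzian_mul_exp_neg_sq hσ hγ, integral_exp_neg_mul_sub_mul_sq_Ioi hσ,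
    integral_exp_neg_sq_div_two_Ioi, sqrt_div' _ pi_pos.le, sqrt_mul' _ pi_pos.le]
  field_simp
  rw [sq_sqrt pi_pos.le]

theorem dualVoigtDensity_zero (σ γ : ℝ) :
    dualVoigtDensity σ γ 0 =
      1 / (2 * (1 - stdNormalCDF (γ / σ))) * (σ / √(2 * π)) * exp (-γ ^ 2 / (2 * σ ^ 2)) := by
  simp [dualVoigtDensity]

/-- the centered Voigt density at zero equals
√(2/π)·(1/σ)·exp(γ²/(2σ²))·(1 − Φ(γ/σ)); equivalently 2π · p(0) · p'(0) = 1, where p'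
is the Dual Voigt density. -/
theorem voigt_at_zero (σ γ : ℝ) (hσ : 0 < σ) (hγ : 0 < γ) :
    voigtDensity σ γ 0 =
      Real.sqrt (2 / π) * (1 / σ) * Real.exp (γ ^ 2 / (2 * σ ^ 2)) *
        (1 - stdNormalCDF (γ / σ)) ∧
    2 * π * voigtDensity σ γ 0 * dualVoigtDensity σ γ 0 = 1 := by
  refine ⟨voigtDensity_zero hσ hγ, ?_⟩
  have htail : 1 - stdNormalCDF (γ / σ) ≠ 0 := (sub_pos.2 (stdNormalCDF_lt_one _)).ne'
  rw [voigtDensity_zero hσ hγ, dualVoigtDensity_zero, sqrt_div' _ pi_pos.le, sqrt_mul' _ pi_pos.le]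
  field_simp
  rw [mul_assoc, ← exp_add, add_neg_cancel, exp_zero, mul_one, sq_sqrt pi_pos.le]
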